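/- Let 0 < r < 1 and let (T₁,…,T_d) be a doubly commuting tuple of invertible bounded operators in C_{1,r} on a complex Hilbert space H. Then there exists a unique family of mutually orthogonal closed subspaces (H_ω), indexed by the 2^d functions ω : {1,…,d} → {1,2}, whose orthogonal direct sum is H, such that: (1) each H_ω is a joint reducing subspace for T₁,…,T_d; and (2) for each ω and each i ∈ {1,…,d}, if ω(i) = 1 then (1+r²)‖x‖² = ‖T_i x‖² + r²‖T_i⁻* x‖² for all x ∈ H_ω (i.e. T_i restricted to H_ω is of class 𝒞_{1,r}), while if ω(i) = 2 then there is no nonzero closed subspace L of H_ω reducing T_i with (1+r²)‖x‖² = ‖T_i x‖² + r²‖T_i⁻* x‖² for all x ∈ L (i.e. T_i restricted to H_ω is a c.n.u. C_{1,r}-contraction). Some of the subspaces H_ω may be the zero subspace. -/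

import Mathlib

/-!
Let `D = T*T + r² T⁻¹T⁻* - (1 + r²)`, so that `⟪D x, x⟫ = ‖T x‖² + r²‖T⁻* x‖² - (1 + r²)‖x‖²`.
The vectors `x` with `D (S x) = 0` for every `S` in the algebra generated by `T, T*, T⁻¹, T⁻*`
form a closed subspace `W(T)` reducing `T` on which `T` is of class `𝒞_{1,r}`, and it contains every
such subspace `L`: the projection onto `L` commutes with that algebra, and by polarization over `ℂ`
the compression of `D` to `L` vanishes. Every operator commuting with `T` and `T*` leaves `W(T)`
invariant, so for a doubly commuting tuple the projections onto the `W(Tᵢ)` commute and the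
intersections of the `W(Tᵢ)` and `W(Tᵢ)ᗮ` span `H`. Conversely, in an admissible family, a piece on
which `Tᵢ` is completely non-`𝒞_{1,r}` is orthogonal to `W(Tᵢ)`, because its projection maps `W(Tᵢ)`
into a reducing `𝒞_{1,r}` subspace of it; hence each piece lies in the corresponding intersection,
and two orthogonal families spanning `H` with one piecewise inside the other coincide.
-/

open ContinuousLinearMap

variable {H : Type*} [NormedAddCommGroup H] [InnerProductSpace ℂ H] [CompleteSpace H]

/-- `T ∈ C_{1,r}`: `T` is invertible, `‖T‖ ≤ 1` and `‖r • T⁻¹‖ ≤ 1`. -/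
def MemC1r (r : ℝ) (T : H →L[ℂ] H) : Prop :=
  IsUnit T ∧ ‖T‖ ≤ 1 ∧ ‖(r : ℂ) • Ring.inverse T‖ ≤ 1

/-- A tuple of operators is doubly commuting if `TᵢTⱼ = TⱼTᵢ` and `TᵢTⱼ* = Tⱼ*Tᵢ` for `i ≠ j`. -/
def DoublyCommuting {d : ℕ} (T : Fin d → H →L[ℂ] H) : Prop :=
  ∀ i j, i ≠ j → T i * T j = T j * T i ∧ T i * adjoint (T j) = adjoint (T j) * T i

/-- A closed subspace `L` reduces `T` if `L` is invariant under both `T` and `T*`. -/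
def Reduces (T : H →L[ℂ] H) (L : Submodule ℂ H) : Prop :=
  ∀ x ∈ L, T x ∈ L ∧ adjoint T x ∈ L

/-- `T` restricted to `L` is of class `𝒞_{1,r}`:
`(1+r²)‖x‖² = ‖Tx‖² + r²‖T⁻*x‖²` for all `x ∈ L`. -/
def RestrictedScriptC1r (r : ℝ) (T : H →L[ℂ] H) (L : Submodule ℂ H) : Prop :=
  ∀ x ∈ L, (1 + r ^ 2) * ‖x‖ ^ 2 = ‖T x‖ ^ 2 + r ^ 2 * ‖adjoint (Ring.inverse T) x‖ ^ 2

open Submodule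

lemma Commute.ring_inverse_right {M₀ : Type*} [MonoidWithZero M₀] {a b : M₀} (ha : IsUnit a)
    (h : Commute b a) : Commute b (Ring.inverse a) := by
  obtain ⟨u, rfl⟩ := ha
  rw [Ring.inverse_unit]
  exact h.units_inv_right

section OrthogonalDecomposition

variable {𝕜 E ι : Type*} [RCLike 𝕜] [NormedAddCommGroup E] [InnerProductSpace 𝕜 E]

lemma Commute.apply_mem_of_starProjection {L : Submodule 𝕜 E} [L.HasOrthogonalProjection]
    {B : E →L[𝕜] E} (h : Commute L.starProjection B) {x : E} (hx : x ∈ L) : B x ∈ L := by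
  rw [← starProjection_eq_self_iff.2 hx, ← mul_apply_eq_comp, ← h.eq]
  exact L.starProjection_apply_mem _

lemma starProjection_mem_orthogonal_of_invariant {U L : Submodule 𝕜 E}
    [L.HasOrthogonalProjection] (hU : ∀ x ∈ U, L.starProjection x ∈ U) :
    ∀ x ∈ Uᗮ, L.starProjection x ∈ Uᗮ := by
  intro x hx
  rw [mem_orthogonal] at hx ⊢
  intro u hu
  rw [← L.inner_starProjection_left_eq_right]
  exact hx _ (hU u hu)

lemma le_inf_sup_inf_orthogonal {U : Submodule 𝕜 E} (L : Submodule 𝕜 E)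
    [L.HasOrthogonalProjection] (hU : ∀ x ∈ U, L.starProjection x ∈ U) :
    U ≤ (U ⊓ L) ⊔ (U ⊓ Lᗮ) := by
  intro x hx
  rw [← add_sub_cancel (L.starProjection x) x]
  exact add_mem_sup ⟨hU x hx, L.starProjection_apply_mem x⟩
    ⟨sub_mem hx (hU x hx), L.sub_starProjection_mem_orthogonal x⟩

lemma Submodule.eq_of_le_of_pairwise_isOrtho_of_iSup_eq_top {A B : ι → Submodule 𝕜 E}
    (hAB : ∀ i, A i ≤ B i) (hB : Pairwise fun i j => B i ⟂ B j) (hA : ⨆ i, A i = ⊤) : A = B := by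
  funext i
  have hcover : ⊤ ≤ A i ⊔ (B i)ᗮ := hA.ge.trans <| iSup_le fun j => by
    rcases eq_or_ne j i with rfl | hji
    · exact le_sup_left
    · exact le_sup_of_le_right ((hAB j).trans (hB hji).le)
  calc A i = A i ⊔ B i ⊓ (B i)ᗮ := by rw [inf_orthogonal_eq_bot, sup_bot_eq]
    _ = (A i ⊔ (B i)ᗮ) ⊓ B i := by rw [sup_inf_assoc_of_le _ (hAB i), inf_comm]
    _ = B i := inf_eq_right.2 (le_top.trans hcover)

def orthoAtom (K : ι → Submodule 𝕜 E) (ω : ι → Bool) : Submodule 𝕜 E :=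
  ⨅ i, cond (ω i) (K i) (K i)ᗮ

variable {K : ι → Submodule 𝕜 E} {ω ω' : ι → Bool}

lemma le_orthoAtom_iff {U : Submodule 𝕜 E} :
    U ≤ orthoAtom K ω ↔ ∀ i, U ≤ cond (ω i) (K i) (K i)ᗮ :=
  le_iInf_iff

lemma orthoAtom_le_of_true {i : ι} (h : ω i = true) : orthoAtom K ω ≤ K i := by
  have := iInf_le (fun j => cond (ω j) (K j) (K j)ᗮ) i
  rwa [h] at this

lemma orthoAtom_le_of_false {i : ι} (h : ω i = false) : orthoAtom K ω ≤ (K i)ᗮ := by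
  have := iInf_le (fun j => cond (ω j) (K j) (K j)ᗮ) i
  rwa [h] at this

lemma isClosed_orthoAtom (hK : ∀ i, IsClosed (K i : Set E)) (ω : ι → Bool) :
    IsClosed (orthoAtom K ω : Set E) := by
  rw [orthoAtom, coe_iInf]
  refine isClosed_iInter fun i => ?_
  cases ω i
  · exact isClosed_orthogonal _
  · exact hK i

lemma orthoAtom_isOrtho (h : ω ≠ ω') : orthoAtom K ω ⟂ orthoAtom K ω' := by
  obtain ⟨i, hi⟩ := Function.ne_iff.1 h
  cases hω : ω i <;> cases hω' : ω' i <;> simp only [hω, hω', ne_eq, not_true_eq_false] at hi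
  · exact (isOrtho_orthogonal_left (K i)).mono (orthoAtom_le_of_false hω) (orthoAtom_le_of_true hω')
  · exact (isOrtho_orthogonal_right (K i)).mono (orthoAtom_le_of_true hω) (orthoAtom_le_of_false hω')

lemma iSup_orthoAtom_eq_top [Finite ι] [∀ i, (K i).HasOrthogonalProjection]
    (hK : ∀ i j, ∀ x ∈ K i, (K j).starProjection x ∈ K i) : ⨆ ω, orthoAtom K ω = ⊤ := by
  classical
  have := Fintype.ofFinite ι
  suffices h : ∀ s : Finset ι, ⨆ ω : ι → Bool, ⨅ i ∈ s, cond (ω i) (K i) (K i)ᗮ = ⊤ by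
    simpa [orthoAtom] using h Finset.univ
  intro s
  induction s using Finset.induction_on with
  | empty => simp
  | insert j s hj ih =>
    refine eq_top_iff.2 (ih.ge.trans (iSup_le fun ω => ?_))
    set U := ⨅ i ∈ s, cond (ω i) (K i) (K i)ᗮ
    have hside : ∀ i b, ∀ x ∈ cond b (K i) (K i)ᗮ,
        (K j).starProjection x ∈ cond b (K i) (K i)ᗮ := by
      rintro i (_ | _)
      exacts [starProjection_mem_orthogonal_of_invariant (hK i j), hK i j]
    have hU : ∀ x ∈ U, (K j).starProjection x ∈ U := by
      simp only [U, mem_iInf]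
      exact fun x hx i hi => hside i (ω i) x (hx i hi)
    have hpiece : ∀ b, U ⊓ cond b (K j) (K j)ᗮ ≤
        ⨅ i ∈ insert j s, cond (Function.update ω j b i) (K i) (K i)ᗮ := by
      intro b
      rw [Finset.iInf_insert, Function.update_self, inf_comm]
      refine inf_le_inf_left _ (iInf₂_mono fun i hi => ?_)
      rw [Function.update_of_ne (ne_of_mem_of_not_mem hi hj)]
    exact (le_inf_sup_inf_orthogonal (K j) hU).trans (sup_le
      ((hpiece true).trans (le_iSup_of_le (Function.update ω j true) le_rfl))
      ((hpiece false).trans (le_iSup_of_le (Function.update ω j false) le_rfl)))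

end OrthogonalDecomposition

namespace Reduces

variable {T : H →L[ℂ] H} {L : Submodule ℂ H}

lemma adjoint (h : Reduces T L) : Reduces (adjoint T) L := fun x hx => by
  simpa only [adjoint_adjoint, and_comm] using h x hx

lemma orthogonal (h : Reduces T L) : Reduces T Lᗮ := by
  have hinv : ∀ {A : H →L[ℂ] H}, Reduces A L → ∀ x ∈ Lᗮ, A x ∈ Lᗮ := by
    intro A hA x hx
    rw [mem_orthogonal] at hx ⊢
    intro u hu
    rw [← adjoint_inner_left]
    exact hx _ (hA u hu).2
  exact fun x hx => ⟨hinv h x hx, hinv h.adjoint x hx⟩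

lemma iInf {ι : Sort*} {L : ι → Submodule ℂ H} (h : ∀ i, Reduces T (L i)) :
    Reduces T (⨅ i, L i) := by
  simp only [Reduces, mem_iInf]
  exact fun x hx => ⟨fun i => (h i x (hx i)).1, fun i => (h i x (hx i)).2⟩

lemma inf {K : Submodule ℂ H} (hK : Reduces T K) (hL : Reduces T L) : Reduces T (K ⊓ L) :=
  fun x hx => ⟨⟨(hK x hx.1).1, (hL x hx.2).1⟩, ⟨(hK x hx.1).2, (hL x hx.2).2⟩⟩

lemma commute_starProjection [L.HasOrthogonalProjection] (h : Reduces T L) :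
    Commute L.starProjection T := by
  ext x
  have hsplit : T x = T (L.starProjection x) + T (x - L.starProjection x) := by
    rw [← map_add, add_sub_cancel]
  simp only [mul_apply_eq_comp]
  rw [hsplit, map_add, starProjection_eq_self_iff.2 (h _ (L.starProjection_apply_mem x)).1,
    (starProjection_apply_eq_zero_iff L).2 (h.orthogonal _ (L.sub_starProjection_mem_orthogonal x)).1,
    add_zero]

end Reduces

section C1rPart

variable {r : ℝ} {T B S : H →L[ℂ] H}

noncomputable def c1rDefect (r : ℝ) (T : H →L[ℂ] H) : H →L[ℂ] H :=
  adjoint T * T + (r : ℂ) ^ 2 • (Ring.inverse T * adjoint (Ring.inverse T)) - (1 + (r : ℂ) ^ 2) • 1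

lemma inner_c1rDefect_self_eq_zero_iff (x : H) :
    inner ℂ (c1rDefect r T x) x = 0 ↔
      (1 + r ^ 2) * ‖x‖ ^ 2 = ‖T x‖ ^ 2 + r ^ 2 * ‖adjoint (Ring.inverse T) x‖ ^ 2 := by
  have hform : inner ℂ (c1rDefect r T x) x =
      ((‖T x‖ ^ 2 + r ^ 2 * ‖adjoint (Ring.inverse T) x‖ ^ 2 - (1 + r ^ 2) * ‖x‖ ^ 2 : ℝ) : ℂ) := by
    simp only [c1rDefect, sub_apply, add_apply, smul_apply, mul_apply_eq_comp, one_apply_eq_self,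
      inner_sub_left, inner_add_left, inner_smul_left, adjoint_inner_left]
    rw [← adjoint_inner_right (Ring.inverse T)]
    simp only [inner_self_eq_norm_sq_to_K, RCLike.ofReal_eq_complex_ofReal, map_add, map_pow,
      map_one, Complex.conj_ofReal]
    push_cast
    ring
  rw [hform, Complex.ofReal_eq_zero, sub_eq_zero, eq_comm]

def adjointInverseAlgebra (T : H →L[ℂ] H) : Subalgebra ℂ (H →L[ℂ] H) :=
  Algebra.adjoin ℂ {T, adjoint T, Ring.inverse T, adjoint (Ring.inverse T)}

lemma c1rDefect_mem_adjointInverseAlgebra : c1rDefect r T ∈ adjointInverseAlgebra T := by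
  have hgen : ∀ A ∈ ({T, adjoint T, Ring.inverse T, adjoint (Ring.inverse T)} : Set _),
      A ∈ adjointInverseAlgebra T := fun A hA => Algebra.subset_adjoin hA
  unfold c1rDefect
  refine sub_mem (add_mem (mul_mem ?_ ?_) (Subalgebra.smul_mem _ (mul_mem ?_ ?_) _))
    (Subalgebra.smul_mem _ (one_mem _) _) <;> exact hgen _ (by simp)

lemma Commute.of_mem_adjointInverseAlgebra (hT : IsUnit T) (h : Commute B T)
    (h' : Commute B (adjoint T)) (hS : S ∈ adjointInverseAlgebra T) : Commute B S := by
  have hT' : IsUnit (adjoint T) := by simpa only [star_eq_adjoint] using hT.star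
  have hinv' : adjoint (Ring.inverse T) = Ring.inverse (adjoint T) := by
    simp only [← star_eq_adjoint, Ring.inverse_star]
  have hcent : ∀ A, Commute B A → A ∈ Subalgebra.centralizer ℂ {B} := fun A hA =>
    (Subalgebra.mem_centralizer_iff ℂ).2 (by rintro _ rfl; exact hA.eq)
  have hgen : {T, adjoint T, Ring.inverse T, adjoint (Ring.inverse T)} ⊆
      (Subalgebra.centralizer ℂ {B} : Set (H →L[ℂ] H)) :=
    Set.insert_subset (hcent _ h) <| Set.insert_subset (hcent _ h') <|
      Set.insert_subset (hcent _ (h.ring_inverse_right hT)) <|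
        Set.singleton_subset_iff.2 (hinv' ▸ hcent _ (h'.ring_inverse_right hT'))
  exact (Subalgebra.mem_centralizer_iff ℂ).1 (Algebra.adjoin_le hgen hS) B rfl

/-- The largest closed subspace reducing `T` on which `T` is of class `𝒞_{1,r}`. -/
noncomputable def c1rPart (r : ℝ) (T : H →L[ℂ] H) : Submodule ℂ H :=
  ⨅ S ∈ adjointInverseAlgebra T, LinearMap.ker ((c1rDefect r T * S : H →L[ℂ] H) : H →ₗ[ℂ] H)

lemma mem_c1rPart {x : H} :
    x ∈ c1rPart r T ↔ ∀ S ∈ adjointInverseAlgebra T, c1rDefect r T (S x) = 0 := by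
  simp [c1rPart, mem_iInf]

lemma isClosed_c1rPart (r : ℝ) (T : H →L[ℂ] H) : IsClosed (c1rPart r T : Set H) := by
  simp only [c1rPart, coe_iInf]
  exact isClosed_biInter fun S _ => (c1rDefect r T * S).isClosed_ker

instance (r : ℝ) (T : H →L[ℂ] H) : (c1rPart r T).HasOrthogonalProjection :=
  have := (isClosed_c1rPart r T).completeSpace_coe
  .ofCompleteSpace _

lemma apply_mem_c1rPart (hS : S ∈ adjointInverseAlgebra T) {x : H} (hx : x ∈ c1rPart r T) :
    S x ∈ c1rPart r T :=
  mem_c1rPart.2 fun S' hS' => by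
    simpa only [mul_apply_eq_comp] using mem_c1rPart.1 hx _ (mul_mem hS' hS)

lemma reduces_c1rPart : Reduces T (c1rPart r T) := fun _ hx =>
  ⟨apply_mem_c1rPart (Algebra.subset_adjoin (by simp)) hx,
    apply_mem_c1rPart (Algebra.subset_adjoin (by simp)) hx⟩

lemma c1rDefect_apply_eq_zero_of_mem_c1rPart {x : H} (hx : x ∈ c1rPart r T) :
    c1rDefect r T x = 0 := by
  simpa only [one_apply_eq_self] using mem_c1rPart.1 hx 1 (one_mem _)

lemma restrictedScriptC1r_c1rPart : RestrictedScriptC1r r T (c1rPart r T) := fun x hx => by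
  rw [← inner_c1rDefect_self_eq_zero_iff, c1rDefect_apply_eq_zero_of_mem_c1rPart hx,
    inner_zero_left]

lemma apply_mem_c1rPart_of_commute (hT : IsUnit T) (h : Commute B T) (h' : Commute B (adjoint T))
    {x : H} (hx : x ∈ c1rPart r T) : B x ∈ c1rPart r T := by
  refine mem_c1rPart.2 fun S hS => ?_
  have hBD := h.of_mem_adjointInverseAlgebra hT h' (c1rDefect_mem_adjointInverseAlgebra (r := r))
  have hBS := h.of_mem_adjointInverseAlgebra hT h' hS
  rw [← mul_apply_eq_comp S, ← hBS.eq, mul_apply_eq_comp, ← mul_apply_eq_comp, ← hBD.eq,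
    mul_apply_eq_comp, mem_c1rPart.1 hx S hS, map_zero]

end C1rPart

section Maximality

variable {r : ℝ} {T : H →L[ℂ] H} {K L : Submodule ℂ H}

lemma Reduces.commute_of_mem_adjointInverseAlgebra [L.HasOrthogonalProjection] (hT : IsUnit T)
    (h : Reduces T L) {S : H →L[ℂ] H} (hS : S ∈ adjointInverseAlgebra T) :
    Commute L.starProjection S :=
  h.commute_starProjection.of_mem_adjointInverseAlgebra hT h.adjoint.commute_starProjection hS

lemma RestrictedScriptC1r.c1rDefect_apply_eq_zero [L.HasOrthogonalProjection] (hT : IsUnit T)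
    (hred : Reduces T L) (hs : RestrictedScriptC1r r T L) {x : H} (hx : x ∈ L) :
    c1rDefect r T x = 0 := by
  set P := L.starProjection
  have hPD : Commute P (c1rDefect r T) :=
    hred.commute_of_mem_adjointInverseAlgebra hT c1rDefect_mem_adjointInverseAlgebra
  -- The compression `P D P` has vanishing quadratic form, so it vanishes (polarization over `ℂ`).
  have hcomp : P * c1rDefect r T * P = 0 := by
    refine coe_injective ((inner_map_self_eq_zero _).1 fun y => ?_)
    simp only [coe_coe, mul_apply_eq_comp, P, L.inner_starProjection_left_eq_right]
    exact (inner_c1rDefect_self_eq_zero_iff _).2 (hs _ (L.starProjection_apply_mem y))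
  have hx' : P x = x := starProjection_eq_self_iff.2 hx
  calc c1rDefect r T x = (P * c1rDefect r T * P) x := by
        rw [hPD.eq, mul_apply_eq_comp, mul_apply_eq_comp, hx', hx']
    _ = 0 := by rw [hcomp, zero_apply]

lemma le_c1rPart (hT : IsUnit T) (hL : IsClosed (L : Set H)) (hred : Reduces T L)
    (hs : RestrictedScriptC1r r T L) : L ≤ c1rPart r T := by
  have := hL.completeSpace_coe
  intro x hx
  refine mem_c1rPart.2 fun S hS => hs.c1rDefect_apply_eq_zero hT hred ?_
  exact (hred.commute_of_mem_adjointInverseAlgebra hT hS).apply_mem_of_starProjection hx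

lemma eq_bot_of_le_orthogonal_c1rPart (hT : IsUnit T) (hL : IsClosed (L : Set H))
    (hred : Reduces T L) (hs : RestrictedScriptC1r r T L) (hle : L ≤ (c1rPart r T)ᗮ) : L = ⊥ :=
  eq_bot_iff.2 <| (le_inf (le_c1rPart hT hL hred hs) hle).trans (inf_orthogonal_eq_bot _).le

lemma le_orthogonal_c1rPart (hT : IsUnit T) (hK : IsClosed (K : Set H)) (hred : Reduces T K)
    (hcnu : ¬∃ L : Submodule ℂ H, L ≠ ⊥ ∧ IsClosed (L : Set H) ∧ L ≤ K ∧ Reduces T L ∧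
      RestrictedScriptC1r r T L) :
    K ≤ (c1rPart r T)ᗮ := by
  have := hK.completeSpace_coe
  have hbot : K ⊓ c1rPart r T = ⊥ := by
    by_contra hne
    exact hcnu ⟨_, hne, hK.inter (isClosed_c1rPart r T), inf_le_left, hred.inf reduces_c1rPart,
      fun x hx => restrictedScriptC1r_c1rPart x hx.2⟩
  have hW : c1rPart r T ≤ Kᗮ := fun w hw => by
    have hPw : K.starProjection w ∈ K ⊓ c1rPart r T :=
      ⟨K.starProjection_apply_mem w, apply_mem_c1rPart_of_commute hT
        hred.commute_starProjection hred.adjoint.commute_starProjection hw⟩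
    rw [hbot, mem_bot] at hPw
    exact (starProjection_apply_eq_zero_iff K).1 hPw
  exact (isOrtho_iff_le.2 hW).symm.le

end Maximality

section DoublyCommuting

variable {r : ℝ} {d : ℕ} {T : Fin d → H →L[ℂ] H}

lemma DoublyCommuting.reduces_c1rPart (hu : ∀ i, IsUnit (T i)) (hdc : DoublyCommuting T)
    (i j : Fin d) : Reduces (T i) (c1rPart r (T j)) := by
  rcases eq_or_ne i j with rfl | hij
  · exact _root_.reduces_c1rPart
  have hTT : Commute (T i) (T j) := (hdc i j hij).1
  have hTT' : Commute (T i) (adjoint (T j)) := (hdc i j hij).2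
  have hT'T : Commute (adjoint (T i)) (T j) := (hdc j i hij.symm).2.symm
  have hT'T' : Commute (adjoint (T i)) (adjoint (T j)) := by
    simpa only [star_eq_adjoint] using hTT.star_star
  exact fun x hx => ⟨apply_mem_c1rPart_of_commute (hu j) hTT hTT' hx,
    apply_mem_c1rPart_of_commute (hu j) hT'T hT'T' hx⟩

lemma DoublyCommuting.starProjection_mem_c1rPart (hu : ∀ i, IsUnit (T i))
    (hdc : DoublyCommuting T) (i j : Fin d) {x : H} (hx : x ∈ c1rPart r (T i)) :
    (c1rPart r (T j)).starProjection x ∈ c1rPart r (T i) :=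
  have h := hdc.reduces_c1rPart hu i j
  apply_mem_c1rPart_of_commute (hu i) h.commute_starProjection h.adjoint.commute_starProjection hx

lemma DoublyCommuting.reduces_orthoAtom (hu : ∀ i, IsUnit (T i)) (hdc : DoublyCommuting T)
    (ω : Fin d → Bool) (i : Fin d) : Reduces (T i) (orthoAtom (fun j => c1rPart r (T j)) ω) :=
  Reduces.iInf fun j => by
    cases ω j
    exacts [(hdc.reduces_c1rPart hu i j).orthogonal, hdc.reduces_c1rPart hu i j]

end DoublyCommuting

theorem stmt16_general (r : ℝ) (d : ℕ) (T : Fin d → H →L[ℂ] H)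
    (hu : ∀ i, IsUnit (T i)) (hdc : DoublyCommuting T) :
    ∃! Hf : (Fin d → Bool) → Submodule ℂ H,
      (∀ ω, IsClosed (Hf ω : Set H)) ∧
      (∀ ω ω', ω ≠ ω' → ∀ x ∈ Hf ω, ∀ y ∈ Hf ω', (inner ℂ x y : ℂ) = 0) ∧
      (⨆ ω, Hf ω) = ⊤ ∧
      (∀ ω i, Reduces (T i) (Hf ω)) ∧
      (∀ ω i,
        (ω i = true → RestrictedScriptC1r r (T i) (Hf ω)) ∧
        (ω i = false → ¬∃ L : Submodule ℂ H, L ≠ ⊥ ∧ IsClosed (L : Set H) ∧ L ≤ Hf ω ∧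
          Reduces (T i) L ∧ RestrictedScriptC1r r (T i) L)) := by
  refine ⟨orthoAtom fun i => c1rPart r (T i),
    ⟨isClosed_orthoAtom fun i => isClosed_c1rPart r (T i),
      fun ω ω' h => isOrtho_iff_inner_eq.1 (orthoAtom_isOrtho h),
      iSup_orthoAtom_eq_top (hdc.starProjection_mem_c1rPart hu), hdc.reduces_orthoAtom hu,
      fun ω i => ⟨fun h x hx => ?_, fun h ⟨L, hL0, hLc, hLle, hred, hs⟩ => hL0 ?_⟩⟩, ?_⟩
  · exact restrictedScriptC1r_c1rPart x (orthoAtom_le_of_true h hx)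
  · exact eq_bot_of_le_orthogonal_c1rPart (hu i) hLc hred hs (hLle.trans (orthoAtom_le_of_false h))
  rintro Hf ⟨hc, -, hsup, hred, hs⟩
  refine eq_of_le_of_pairwise_isOrtho_of_iSup_eq_top (fun ω => le_orthoAtom_iff.2 fun i => ?_)
    (fun ω ω' h => orthoAtom_isOrtho h) hsup
  cases hω : ω i
  · exact le_orthogonal_c1rPart (hu i) (hc ω) (hred ω i) ((hs ω i).2 hω)
  · exact le_c1rPart (hu i) (hc ω) (hred ω i) ((hs ω i).1 hω)

theorem stmt16 (r : ℝ) (hr0 : 0 < r) (hr1 : r < 1) (d : ℕ) (T : Fin d → H →L[ℂ] H)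
    (hu : ∀ i, IsUnit (T i)) (hdc : DoublyCommuting T) (hmem : ∀ i, MemC1r r (T i)) :
    ∃! Hf : (Fin d → Bool) → Submodule ℂ H,
      (∀ ω, IsClosed (Hf ω : Set H)) ∧
      (∀ ω ω', ω ≠ ω' → ∀ x ∈ Hf ω, ∀ y ∈ Hf ω', (inner ℂ x y : ℂ) = 0) ∧
      (⨆ ω, Hf ω) = ⊤ ∧
      (∀ ω i, Reduces (T i) (Hf ω)) ∧
      (∀ ω i,
        (ω i = true → RestrictedScriptC1r r (T i) (Hf ω)) ∧
        (ω i = false → ¬∃ L : Submodule ℂ H, L ≠ ⊥ ∧ IsClosed (L : Set H) ∧ L ≤ Hf ω ∧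
          Reduces (T i) L ∧ RestrictedScriptC1r r (T i) L)) :=
  stmt16_general r d T hu hdc
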